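/- arXiv:2306.06617 — 8 statements merged into one kernel-verified Lean document; each statement's English description precedes it below -/
import Mathlib

section
/- Let δ ∈ (0,1]. For all complex numbers z and w one has the Lipschitz estimate |f_δ(|z|²)·z − f_δ(|w|²)·w| ≤ (|log δ| + 2)·|z − w|, where |log δ| = -log δ. -/
noncomputable def fReg (δ r : ℝ) : ℝ := Real.log ((δ + r) / (1 + δ * r))

lemma fReg_abs_le (δ r : ℝ) (hδ0 : 0 < δ) (hδ1 : δ ≤ 1) (hr : 0 ≤ r) :
    |fReg δ r| ≤ -Real.log δ := by
  have h1 : (0:ℝ) < 1 + δ * r := by nlinarith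
  have h2 : (0:ℝ) < δ + r := by linarith
  rw [abs_le]
  constructor
  · have : δ ≤ (δ + r) / (1 + δ * r) := by
      rw [le_div_iff₀ h1]; nlinarith [mul_nonneg (mul_nonneg hr (sub_nonneg.2 hδ1)) (by linarith : (0:ℝ) ≤ 1 + δ)]
    have := Real.log_le_log hδ0 this
    simpa [fReg] using this
  · have : (δ + r) / (1 + δ * r) ≤ δ⁻¹ := by
      rw [div_le_iff₀ h1, inv_mul_eq_div, le_div_iff₀ hδ0]; nlinarith
    have := Real.log_le_log (by positivity) this
    simpa [fReg, Real.log_inv] using this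

lemma fReg_mono (δ a b : ℝ) (hδ0 : 0 < δ) (hδ1 : δ ≤ 1) (hb : 0 ≤ b) (hab : b ≤ a) :
    fReg δ b ≤ fReg δ a := by
  have h1a : (0:ℝ) < 1 + δ * a := by nlinarith
  have h1b : (0:ℝ) < 1 + δ * b := by nlinarith
  have h2a : (0:ℝ) < δ + a := by linarith
  have h2b : (0:ℝ) < δ + b := by linarith
  unfold fReg
  apply Real.log_le_log (by positivity)
  rw [div_le_div_iff₀ h1b h1a]
  nlinarith [mul_nonneg (sub_nonneg.2 hab) (sub_nonneg.2 hδ1), sq_nonneg δ]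

lemma fReg_sub_le (δ a b : ℝ) (hδ0 : 0 < δ) (hb : 0 < b) (hab : b ≤ a) :
    fReg δ a - fReg δ b ≤ Real.log a - Real.log b := by
  have ha : (0:ℝ) < a := lt_of_lt_of_le hb hab
  have h1a : (0:ℝ) < 1 + δ * a := by nlinarith
  have h1b : (0:ℝ) < 1 + δ * b := by nlinarith
  have h2a : (0:ℝ) < δ + a := by linarith
  have h2b : (0:ℝ) < δ + b := by linarith
  have key : (δ + a) * (1 + δ * b) * b ≤ a * (1 + δ * a) * (δ + b) := by
    nlinarith [mul_nonneg (mul_nonneg hδ0.le (sub_nonneg.2 hab)) (mul_nonneg ha.le hb.le),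
      mul_nonneg hδ0.le (sub_nonneg.2 hab), mul_nonneg (mul_nonneg hδ0.le hδ0.le)
        (mul_nonneg (add_nonneg ha.le hb.le) (sub_nonneg.2 hab))]
  have hlog := Real.log_le_log (by positivity) key
  rw [Real.log_mul (by positivity) hb.ne', Real.log_mul (by positivity) h2b.ne',
      Real.log_mul h2a.ne' h1b.ne', Real.log_mul ha.ne' h1a.ne'] at hlog
  unfold fReg
  rw [Real.log_div h2a.ne' h1a.ne', Real.log_div h2b.ne' h1b.ne']
  linarith

lemma key_scalar (δ a b : ℝ) (hδ0 : 0 < δ) (hδ1 : δ ≤ 1) (hb : 0 ≤ b) (hab : b ≤ a) :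
    (fReg δ (a ^ 2) - fReg δ (b ^ 2)) * b ≤ 2 * (a - b) := by
  rcases eq_or_lt_of_le hb with h | hbpos
  · simp [← h]; linarith
  · have ha : 0 < a := lt_of_lt_of_le hbpos hab
    have h1 := fReg_sub_le δ (a^2) (b^2) hδ0 (by positivity) (by nlinarith)
    have h2 : Real.log (a^2) - Real.log (b^2) = 2 * (Real.log a - Real.log b) := by
      rw [Real.log_pow, Real.log_pow]; push_cast; ring
    have h3 : Real.log a - Real.log b ≤ a / b - 1 := by
      have := Real.log_le_sub_one_of_pos (show 0 < a / b by positivity)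
      rwa [Real.log_div ha.ne' hbpos.ne'] at this
    have h4 : (Real.log a - Real.log b) * b ≤ a - b := by
      have h5 := mul_le_mul_of_nonneg_right h3 hbpos.le
      have h6 : a / b * b = a := div_mul_cancel₀ a hbpos.ne'
      nlinarith [h5, h6]
    nlinarith

lemma main_half (δ : ℝ) (hδ : δ ∈ Set.Ioc (0 : ℝ) 1) (z w : ℂ) (h : ‖w‖ ≤ ‖z‖) :
    ‖(fReg δ (‖z‖ ^ 2) : ℂ) * z - (fReg δ (‖w‖ ^ 2) : ℂ) * w‖ ≤
      (-Real.log δ + 2) * ‖z - w‖ := by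
  obtain ⟨hδ0, hδ1⟩ := hδ
  set a := ‖z‖; set b := ‖w‖
  have hb : 0 ≤ b := norm_nonneg w
  have hid : (fReg δ (a ^ 2) : ℂ) * z - (fReg δ (b ^ 2) : ℂ) * w =
      (fReg δ (a ^ 2) : ℂ) * (z - w) + ((fReg δ (a ^ 2) - fReg δ (b ^ 2) : ℝ) : ℂ) * w := by
    push_cast; ring
  rw [hid]
  calc ‖(fReg δ (a ^ 2) : ℂ) * (z - w) + ((fReg δ (a ^ 2) - fReg δ (b ^ 2) : ℝ) : ℂ) * w‖
      ≤ ‖(fReg δ (a ^ 2) : ℂ) * (z - w)‖ + ‖((fReg δ (a ^ 2) - fReg δ (b ^ 2) : ℝ) : ℂ) * w‖ :=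
        norm_add_le _ _
    _ = |fReg δ (a ^ 2)| * ‖z - w‖ + |fReg δ (a ^ 2) - fReg δ (b ^ 2)| * b := by
        rw [norm_mul, norm_mul, Complex.norm_real, Complex.norm_real, Real.norm_eq_abs, Real.norm_eq_abs]
    _ ≤ (-Real.log δ) * ‖z - w‖ + 2 * (a - b) := by
        have hA := fReg_abs_le δ (a ^ 2) hδ0 hδ1 (by positivity)
        have hM := fReg_mono δ (a ^ 2) (b ^ 2) hδ0 hδ1 (by positivity) (by nlinarith)
        have hK := key_scalar δ a b hδ0 hδ1 hb h
        have habs : |fReg δ (a ^ 2) - fReg δ (b ^ 2)| = fReg δ (a ^ 2) - fReg δ (b ^ 2) :=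
          abs_of_nonneg (by linarith)
        rw [habs]
        have := mul_le_mul_of_nonneg_right hA (norm_nonneg (z - w))
        linarith
    _ ≤ (-Real.log δ) * ‖z - w‖ + 2 * ‖z - w‖ := by
        have : a - b ≤ ‖z - w‖ := norm_sub_norm_le z w
        linarith
    _ = (-Real.log δ + 2) * ‖z - w‖ := by ring

/-- For `δ ∈ (0,1]`, the map `z ↦ f_δ(|z|²) z` is globally Lipschitz on `ℂ` with
constant `|log δ| + 2 = -log δ + 2`. -/
theorem regularized_log_lipschitz (δ : ℝ) (hδ : δ ∈ Set.Ioc (0 : ℝ) 1) (z w : ℂ) :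
    ‖(fReg δ (‖z‖ ^ 2) : ℂ) * z - (fReg δ (‖w‖ ^ 2) : ℂ) * w‖ ≤
      (-Real.log δ + 2) * ‖z - w‖ := by
  rcases le_total ‖w‖ ‖z‖ with h | h
  · exact main_half δ hδ z w h
  · have := main_half δ hδ w z h
    rwa [norm_sub_rev, norm_sub_rev w z] at this
end

section
/- Let δ ∈ (0,1]. For all complex numbers z and w one has |Im((f_δ(|z|²)·z − f_δ(|w|²)·w)·conj(z − w))| ≤ 4·|z − w|²; equivalently, the real part of i·(f_δ(|z|²)·z − f_δ(|w|²)·w)·conj(z − w) is bounded in absolute value by 4·|z − w|². -/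
lemma le_sqrt_add (a S : ℝ) (ha : 0 ≤ a) (hS : 0 ≤ S) : S ≤ Real.sqrt (a + S ^ 2) := by
  nlinarith [Real.sq_sqrt (show (0:ℝ) ≤ a + S ^ 2 by positivity),
    Real.sqrt_nonneg (a + S ^ 2)]

lemma log_sub_log_le (x y : ℝ) (hy : 0 < y) (hxy : y ≤ x) :
    Real.log x - Real.log y ≤ 2 * (Real.sqrt x - Real.sqrt y) / Real.sqrt y := by
  have hx : 0 < x := hy.trans_le hxy
  have hsy : 0 < Real.sqrt y := Real.sqrt_pos.2 hy
  have hsx : 0 < Real.sqrt x := Real.sqrt_pos.2 hx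
  have h1 : Real.log x - Real.log y = 2 * Real.log (Real.sqrt x / Real.sqrt y) := by
    rw [Real.log_div hsx.ne' hsy.ne', Real.log_sqrt hx.le, Real.log_sqrt hy.le]; ring
  have h2 : Real.log (Real.sqrt x / Real.sqrt y) ≤ Real.sqrt x / Real.sqrt y - 1 :=
    Real.log_le_sub_one_of_pos (by positivity)
  have h3 : Real.sqrt x / Real.sqrt y - 1 = (Real.sqrt x - Real.sqrt y) / Real.sqrt y := by
    field_simp
  rw [h1, mul_div_assoc]
  rw [h3] at h2
  linarith

lemma key (δ : ℝ) (hδ0 : 0 < δ) (S R : ℝ) (hS : 0 ≤ S) (hSR : S ≤ R) :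
    S * |fReg δ (R ^ 2) - fReg δ (S ^ 2)| ≤ 4 * (R - S) := by
  have hR : 0 ≤ R := hS.trans hSR
  have hsq : S ^ 2 ≤ R ^ 2 := by nlinarith
  have p1 : (0:ℝ) < δ + S ^ 2 := by positivity
  have p2 : (0:ℝ) < δ + R ^ 2 := by positivity
  have p3 : (0:ℝ) < 1 + δ * S ^ 2 := by positivity
  have p4 : (0:ℝ) < 1 + δ * R ^ 2 := by positivity
  have fr : ∀ r : ℝ, 0 ≤ r → fReg δ r = Real.log (δ + r) - Real.log (1 + δ * r) := by
    intro r hr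
    unfold fReg
    rw [Real.log_div (by positivity) (by positivity)]
  rw [fr _ (by positivity), fr _ (by positivity)]
  have hA0 : 0 ≤ Real.log (δ + R ^ 2) - Real.log (δ + S ^ 2) := by
    have := Real.log_le_log p1 (by linarith : δ + S ^ 2 ≤ δ + R ^ 2)
    linarith
  have hB0 : 0 ≤ Real.log (1 + δ * R ^ 2) - Real.log (1 + δ * S ^ 2) := by
    have := Real.log_le_log p3
      (by nlinarith [mul_le_mul_of_nonneg_left hsq hδ0.le] : 1 + δ * S ^ 2 ≤ 1 + δ * R ^ 2)
    linarith
  have habs : |Real.log (δ + R ^ 2) - Real.log (1 + δ * R ^ 2) -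
      (Real.log (δ + S ^ 2) - Real.log (1 + δ * S ^ 2))| ≤
      (Real.log (δ + R ^ 2) - Real.log (δ + S ^ 2)) +
      (Real.log (1 + δ * R ^ 2) - Real.log (1 + δ * S ^ 2)) := by
    rw [abs_le]; constructor <;> linarith
  -- bound S * A ≤ 2 (R - S)
  have hSA : S * (Real.log (δ + R ^ 2) - Real.log (δ + S ^ 2)) ≤ 2 * (R - S) := by
    have h1 := log_sub_log_le (δ + R ^ 2) (δ + S ^ 2) p1 (by linarith)
    have hy : S ≤ Real.sqrt (δ + S ^ 2) := le_sqrt_add δ S hδ0.le hS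
    have hsy : 0 < Real.sqrt (δ + S ^ 2) := Real.sqrt_pos.2 p1
    have h2 : Real.sqrt (δ + R ^ 2) - Real.sqrt (δ + S ^ 2) ≤ R - S := by
      have hle : Real.sqrt (δ + R ^ 2) ≤ (R - S) + Real.sqrt (δ + S ^ 2) := by
        have e1 := Real.sq_sqrt p1.le
        have : δ + R ^ 2 ≤ ((R - S) + Real.sqrt (δ + S ^ 2)) ^ 2 := by nlinarith
        calc Real.sqrt (δ + R ^ 2) ≤ Real.sqrt (((R - S) + Real.sqrt (δ + S ^ 2)) ^ 2) :=
              Real.sqrt_le_sqrt this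
          _ = (R - S) + Real.sqrt (δ + S ^ 2) := Real.sqrt_sq (by linarith)
      linarith
    have hnum : 0 ≤ Real.sqrt (δ + R ^ 2) - Real.sqrt (δ + S ^ 2) := by
      have := Real.sqrt_le_sqrt (by linarith : δ + S ^ 2 ≤ δ + R ^ 2); linarith
    calc S * (Real.log (δ + R ^ 2) - Real.log (δ + S ^ 2))
        ≤ S * (2 * (Real.sqrt (δ + R ^ 2) - Real.sqrt (δ + S ^ 2)) / Real.sqrt (δ + S ^ 2)) :=
          mul_le_mul_of_nonneg_left h1 hS
      _ ≤ Real.sqrt (δ + S ^ 2) *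
            (2 * (Real.sqrt (δ + R ^ 2) - Real.sqrt (δ + S ^ 2)) / Real.sqrt (δ + S ^ 2)) := by
          apply mul_le_mul_of_nonneg_right hy
          positivity
      _ = 2 * (Real.sqrt (δ + R ^ 2) - Real.sqrt (δ + S ^ 2)) := by
          field_simp
      _ ≤ 2 * (R - S) := by linarith
  -- bound S * B ≤ 2 (R - S)
  have hSB : S * (Real.log (1 + δ * R ^ 2) - Real.log (1 + δ * S ^ 2)) ≤ 2 * (R - S) := by
    have h1 := log_sub_log_le (1 + δ * R ^ 2) (1 + δ * S ^ 2) p3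
      (by nlinarith [mul_le_mul_of_nonneg_left hsq hδ0.le])
    have hsd : 0 < Real.sqrt δ := Real.sqrt_pos.2 hδ0
    have hsd2 := Real.sq_sqrt hδ0.le
    have hy : Real.sqrt δ * S ≤ Real.sqrt (1 + δ * S ^ 2) := by
      nlinarith [Real.sq_sqrt p3.le, Real.sqrt_nonneg (1 + δ * S ^ 2)]
    have hsy : 0 < Real.sqrt (1 + δ * S ^ 2) := Real.sqrt_pos.2 p3
    have h2 : Real.sqrt (1 + δ * R ^ 2) - Real.sqrt (1 + δ * S ^ 2) ≤ Real.sqrt δ * (R - S) := by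
      have hb : 0 ≤ Real.sqrt δ * (R - S) + Real.sqrt (1 + δ * S ^ 2) := by
        have : 0 ≤ Real.sqrt δ * (R - S) := mul_nonneg hsd.le (by linarith)
        linarith
      have e1 := Real.sq_sqrt p3.le
      have hle : Real.sqrt (1 + δ * R ^ 2) ≤ Real.sqrt δ * (R - S) + Real.sqrt (1 + δ * S ^ 2) := by
        have hsq2 : 1 + δ * R ^ 2 ≤ (Real.sqrt δ * (R - S) + Real.sqrt (1 + δ * S ^ 2)) ^ 2 := by
          nlinarith [mul_le_mul_of_nonneg_left hy
            (mul_nonneg (by linarith : (0:ℝ) ≤ 2 * Real.sqrt δ) (by linarith : (0:ℝ) ≤ R - S))]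
        calc Real.sqrt (1 + δ * R ^ 2)
            ≤ Real.sqrt ((Real.sqrt δ * (R - S) + Real.sqrt (1 + δ * S ^ 2)) ^ 2) :=
              Real.sqrt_le_sqrt hsq2
          _ = _ := Real.sqrt_sq hb
      linarith
    calc S * (Real.log (1 + δ * R ^ 2) - Real.log (1 + δ * S ^ 2))
        ≤ S * (2 * (Real.sqrt (1 + δ * R ^ 2) - Real.sqrt (1 + δ * S ^ 2)) /
            Real.sqrt (1 + δ * S ^ 2)) := mul_le_mul_of_nonneg_left h1 hS
      _ ≤ 2 * (R - S) := by
          rw [mul_div_assoc', div_le_iff₀ hsy]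
          nlinarith [mul_le_mul_of_nonneg_left h2 (by linarith : (0:ℝ) ≤ 2 * S),
            mul_le_mul_of_nonneg_left hy (by linarith : (0:ℝ) ≤ 2 * (R - S))]
  calc S * |Real.log (δ + R ^ 2) - Real.log (1 + δ * R ^ 2) -
        (Real.log (δ + S ^ 2) - Real.log (1 + δ * S ^ 2))|
      ≤ S * ((Real.log (δ + R ^ 2) - Real.log (δ + S ^ 2)) +
        (Real.log (1 + δ * R ^ 2) - Real.log (1 + δ * S ^ 2))) :=
        mul_le_mul_of_nonneg_left habs hS
    _ ≤ 4 * (R - S) := by nlinarith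

lemma im_eq (a b : ℝ) (z w : ℂ) :
    (((a : ℂ) * z - (b : ℂ) * w) * (starRingEnd ℂ) (z - w)).im
      = (b - a) * (z * (starRingEnd ℂ) w).im := by
  simp [Complex.mul_im, Complex.mul_re, Complex.sub_re, Complex.sub_im,
    Complex.conj_re, Complex.conj_im, Complex.ofReal_re, Complex.ofReal_im]
  ring

lemma im_bound (z w : ℂ) : |(z * (starRingEnd ℂ) w).im| ≤ ‖w‖ * ‖z - w‖ := by
  have h : z * (starRingEnd ℂ) w = (z - w) * (starRingEnd ℂ) w + w * (starRingEnd ℂ) w := by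
    ring
  have h2 : (w * (starRingEnd ℂ) w).im = 0 := by
    rw [Complex.mul_conj]; simp
  rw [h, Complex.add_im, h2, add_zero]
  calc |((z - w) * (starRingEnd ℂ) w).im| ≤ ‖(z - w) * (starRingEnd ℂ) w‖ :=
        Complex.abs_im_le_norm _
    _ = ‖z - w‖ * ‖w‖ := by rw [norm_mul]; simp
    _ = ‖w‖ * ‖z - w‖ := mul_comm _ _

lemma main_aux (δ : ℝ) (hδ : δ ∈ Set.Ioc (0 : ℝ) 1) (z w : ℂ) (h : ‖w‖ ≤ ‖z‖) :
    |(((fReg δ (‖z‖ ^ 2) : ℂ) * z - (fReg δ (‖w‖ ^ 2) : ℂ) * w) *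
        (starRingEnd ℂ) (z - w)).im| ≤ 4 * ‖z - w‖ ^ 2 := by
  rw [im_eq, abs_mul]
  have hk := key δ hδ.1 ‖w‖ ‖z‖ (norm_nonneg _) h
  have hdist : ‖z‖ - ‖w‖ ≤ ‖z - w‖ := norm_sub_norm_le z w
  have hib := im_bound z w
  have habs : |fReg δ (‖w‖ ^ 2) - fReg δ (‖z‖ ^ 2)| = |fReg δ (‖z‖ ^ 2) - fReg δ (‖w‖ ^ 2)| :=
    abs_sub_comm _ _
  calc |fReg δ (‖w‖ ^ 2) - fReg δ (‖z‖ ^ 2)| * |(z * (starRingEnd ℂ) w).im|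
      ≤ |fReg δ (‖z‖ ^ 2) - fReg δ (‖w‖ ^ 2)| * (‖w‖ * ‖z - w‖) := by
        rw [habs]
        exact mul_le_mul_of_nonneg_left hib (abs_nonneg _)
    _ = (‖w‖ * |fReg δ (‖z‖ ^ 2) - fReg δ (‖w‖ ^ 2)|) * ‖z - w‖ := by ring
    _ ≤ (4 * (‖z‖ - ‖w‖)) * ‖z - w‖ :=
        mul_le_mul_of_nonneg_right hk (norm_nonneg _)
    _ ≤ (4 * ‖z - w‖) * ‖z - w‖ := by
        apply mul_le_mul_of_nonneg_right _ (norm_nonneg _)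
        linarith
    _ = 4 * ‖z - w‖ ^ 2 := by ring

/-- For `δ ∈ (0,1]` and all complex `z, w`,
`|Im((f_δ(|z|²) z − f_δ(|w|²) w) ⋅ conj(z − w))| ≤ 4 |z − w|²`. -/
theorem regularized_log_im_monotonicity (δ : ℝ) (hδ : δ ∈ Set.Ioc (0 : ℝ) 1) (z w : ℂ) :
    |(((fReg δ (‖z‖ ^ 2) : ℂ) * z - (fReg δ (‖w‖ ^ 2) : ℂ) * w) *
        (starRingEnd ℂ) (z - w)).im| ≤ 4 * ‖z - w‖ ^ 2 := by
  rcases le_total ‖w‖ ‖z‖ with h | h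
  · exact main_aux δ hδ z w h
  · have hsym : (((fReg δ (‖z‖ ^ 2) : ℂ) * z - (fReg δ (‖w‖ ^ 2) : ℂ) * w) *
        (starRingEnd ℂ) (z - w)) = (((fReg δ (‖w‖ ^ 2) : ℂ) * w - (fReg δ (‖z‖ ^ 2) : ℂ) * z) *
        (starRingEnd ℂ) (w - z)) := by
      rw [show z - w = -(w - z) by ring, map_neg]; ring
    rw [hsym, show z - w = -(w - z) by ring, norm_neg]
    exact main_aux δ hδ w z h
end

section
/- For all complex numbers z and w one has |Im((z·log(|z|²) − w·log(|w|²))·conj(z − w))| ≤ 2·|z − w|². -/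
lemma aux_min_log (a b : ℝ) (ha : 0 < a) (hb : 0 < b) :
    min a b * |Real.log a - Real.log b| ≤ |a - b| := by
  wlog h : a ≤ b generalizing a b
  · simpa [min_comm, abs_sub_comm] using this b a hb ha (le_of_not_ge h)
  rw [min_eq_left h, abs_sub_comm (Real.log a),
      abs_of_nonneg (sub_nonneg.2 (Real.log_le_log ha h)),
      abs_sub_comm, abs_of_nonneg (sub_nonneg.2 h),
      ← Real.log_div (ne_of_gt hb) (ne_of_gt ha)]
  have hle := Real.log_le_sub_one_of_pos (div_pos hb ha)
  calc a * Real.log (b / a) ≤ a * (b / a - 1) := by nlinarith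
    _ = b - a := by field_simp

lemma aux_im_bound (z w : ℂ) : |(z * (starRingEnd ℂ) w).im| ≤ ‖z - w‖ * min ‖z‖ ‖w‖ := by
  rcases le_total ‖z‖ ‖w‖ with h | h
  · rw [min_eq_left h]
    have h1 : (z * (starRingEnd ℂ) w).im = (z * ((starRingEnd ℂ) w - (starRingEnd ℂ) z)).im := by
      have : (z * (starRingEnd ℂ) z).im = 0 := by
        simp [Complex.mul_im, Complex.conj_re, Complex.conj_im]; ring
      simp [mul_sub, Complex.sub_im, this]
    rw [h1]
    calc |(z * ((starRingEnd ℂ) w - (starRingEnd ℂ) z)).im|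
        ≤ ‖z * ((starRingEnd ℂ) w - (starRingEnd ℂ) z)‖ := Complex.abs_im_le_norm _
      _ = ‖z‖ * ‖w - z‖ := by rw [norm_mul, ← map_sub, RCLike.norm_conj]
      _ = ‖z - w‖ * ‖z‖ := by rw [norm_sub_rev]; ring
  · rw [min_eq_right h]
    have h1 : (z * (starRingEnd ℂ) w).im = ((z - w) * (starRingEnd ℂ) w).im := by
      have : (w * (starRingEnd ℂ) w).im = 0 := by
        simp [Complex.mul_im, Complex.conj_re, Complex.conj_im]; ring
      simp [sub_mul, Complex.sub_im, this]
    rw [h1]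
    calc |((z - w) * (starRingEnd ℂ) w).im|
        ≤ ‖(z - w) * (starRingEnd ℂ) w‖ := Complex.abs_im_le_norm _
      _ = ‖z - w‖ * ‖w‖ := by rw [norm_mul, RCLike.norm_conj]

/-- For all complex `z, w`,
`|Im((z log(|z|²) − w log(|w|²)) ⋅ conj(z − w))| ≤ 2 |z − w|²`,
with the convention `log 0 = 0` (so the nonlinearity vanishes at `0`). -/
theorem log_nonlinearity_im_monotonicity (z w : ℂ) :
    |((z * (Real.log (‖z‖ ^ 2) : ℂ) - w * (Real.log (‖w‖ ^ 2) : ℂ)) *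
        (starRingEnd ℂ) (z - w)).im| ≤ 2 * ‖z - w‖ ^ 2 := by
  have key : ((z * (Real.log (‖z‖ ^ 2) : ℂ) - w * (Real.log (‖w‖ ^ 2) : ℂ)) *
        (starRingEnd ℂ) (z - w)).im
      = (z * (starRingEnd ℂ) w).im * (Real.log (‖w‖ ^ 2) - Real.log (‖z‖ ^ 2)) := by
    simp [Complex.mul_im, Complex.mul_re, Complex.sub_im, Complex.sub_re,
      Complex.conj_re, Complex.conj_im, Complex.ofReal_im, Complex.ofReal_re]
    ring
  rw [key, abs_mul]
  rcases eq_or_ne z 0 with rfl | hz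
  · simp
  rcases eq_or_ne w 0 with rfl | hw
  · simp
  have hz' : (0:ℝ) < ‖z‖ := norm_pos_iff.2 hz
  have hw' : (0:ℝ) < ‖w‖ := norm_pos_iff.2 hw
  have hlog : |Real.log (‖w‖ ^ 2) - Real.log (‖z‖ ^ 2)|
      = 2 * |Real.log ‖z‖ - Real.log ‖w‖| := by
    rw [Real.log_pow, Real.log_pow, abs_sub_comm]
    push_cast
    rw [← mul_sub, abs_mul, abs_two]
  rw [hlog]
  have h1 := aux_im_bound z w
  have h2 := aux_min_log ‖z‖ ‖w‖ hz' hw'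
  have h3 : |‖z‖ - ‖w‖| ≤ ‖z - w‖ := abs_norm_sub_norm_le z w
  have hmin : (0:ℝ) ≤ min ‖z‖ ‖w‖ := le_min hz'.le hw'.le
  have habs : (0:ℝ) ≤ |Real.log ‖z‖ - Real.log ‖w‖| := abs_nonneg _
  nlinarith [norm_nonneg (z - w), abs_nonneg ((z * (starRingEnd ℂ) w).im),
    mul_le_mul_of_nonneg_left h2 (norm_nonneg (z - w)),
    mul_le_mul_of_nonneg_left h3 (norm_nonneg (z - w)),
    mul_le_mul_of_nonneg_right h1 (mul_nonneg (by norm_num : (0:ℝ) ≤ 2) habs)]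
end

section
/- Let δ ∈ (0,1] and let η, η' ∈ (0,1]. For every complex number z one has the pointwise regularization-error bound |f_δ(|z|²)·z − log(|z|²)·z| ≤ (2/η)·δ^{η/2}·|z|^{1−η} + (2/η')·δ^{η'/2}·|z|^{1+η'}. -/
lemma aux_rpow_subadd {a b p : ℝ} (ha : 0 ≤ a) (hb : 0 ≤ b) (hp : 0 ≤ p) (hp1 : p ≤ 1) :
    (a + b) ^ p ≤ a ^ p + b ^ p := by
  lift a to NNReal using ha
  lift b to NNReal using hb
  have := NNReal.rpow_add_le_add_rpow a b hp hp1
  exact_mod_cast this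

lemma aux_log_le {x α : ℝ} (hx : 0 ≤ x) (hα : 0 < α) (hα1 : α ≤ 1) :
    Real.log (1 + x) ≤ x ^ α / α := by
  have h1 : (1 + x) ^ α ≤ 1 + x ^ α := by
    have := aux_rpow_subadd (a := 1) (b := x) zero_le_one hx hα.le hα1
    simpa using this
  have h2 : α * Real.log (1 + x) = Real.log ((1 + x) ^ α) := (Real.log_rpow (by linarith) α).symm
  have h3 : Real.log ((1 + x) ^ α) ≤ (1 + x) ^ α - 1 :=
    Real.log_le_sub_one_of_pos (Real.rpow_pos_of_pos (by linarith) α)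
  have h4 : α * Real.log (1 + x) ≤ x ^ α := by rw [h2]; linarith
  rw [div_eq_inv_mul, ← inv_mul_cancel_left₀ hα.ne' (Real.log (1 + x))]
  exact mul_le_mul_of_nonneg_left h4 (by positivity)

/-- Pointwise regularization-error bound: for `δ, η, η' ∈ (0,1]` and every `z : ℂ`,
`|f_δ(|z|²) z − log(|z|²) z| ≤ (2/η) δ^{η/2} |z|^{1−η} + (2/η') δ^{η'/2} |z|^{1+η'}`. -/
theorem regularized_log_error_pointwise (δ η η' : ℝ) (hδ : δ ∈ Set.Ioc (0 : ℝ) 1)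
    (hη : η ∈ Set.Ioc (0 : ℝ) 1) (hη' : η' ∈ Set.Ioc (0 : ℝ) 1) (z : ℂ) :
    ‖(fReg δ (‖z‖ ^ 2) : ℂ) * z - (Real.log (‖z‖ ^ 2) : ℂ) * z‖ ≤
      2 / η * δ ^ (η / 2) * ‖z‖ ^ (1 - η) + 2 / η' * δ ^ (η' / 2) * ‖z‖ ^ (1 + η') := by
  obtain ⟨hδ0, hδ1⟩ := hδ
  obtain ⟨hη0, hη1⟩ := hη
  obtain ⟨hη'0, hη'1⟩ := hη'
  rcases eq_or_ne z 0 with rfl | hz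
  · simp only [norm_zero, mul_zero, zero_mul, sub_zero]
    positivity
  have hr : 0 < ‖z‖ := norm_pos_iff.mpr hz
  set r : ℝ := ‖z‖ ^ 2 with hrdef
  have hr0 : 0 < r := by positivity
  have hLHS : ‖(fReg δ r : ℂ) * z - (Real.log r : ℂ) * z‖ = |fReg δ r - Real.log r| * ‖z‖ := by
    rw [← sub_mul, norm_mul]
    congr 1
    rw [← Complex.ofReal_sub, Complex.norm_real, Real.norm_eq_abs]
  rw [hLHS]
  set A : ℝ := Real.log (1 + δ / r) with hA
  set B : ℝ := Real.log (1 + δ * r) with hB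
  have hfd : fReg δ r - Real.log r = A - B := by
    have h1 : (1 : ℝ) + δ / r = (δ + r) / r := by field_simp; ring
    rw [hA, hB, h1]
    unfold fReg
    rw [Real.log_div (by positivity) (by positivity),
        Real.log_div (by positivity) hr0.ne']
    ring
  have hA0 : 0 ≤ A := Real.log_nonneg (by nlinarith [div_nonneg hδ0.le hr0.le])
  have hB0 : 0 ≤ B := Real.log_nonneg (by nlinarith)
  -- r^(η/2) = ‖z‖^η etc.
  have hrpow : ∀ t : ℝ, r ^ (t / 2) = ‖z‖ ^ t := by
    intro t
    rw [hrdef, ← Real.rpow_natCast ‖z‖ 2, ← Real.rpow_mul (norm_nonneg z)]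
    norm_num
    congr 1
    ring
  have hAle : A ≤ 2 / η * δ ^ (η / 2) * (‖z‖ ^ η)⁻¹ := by
    have := aux_log_le (div_nonneg hδ0.le hr0.le) (α := η / 2) (by linarith) (by linarith)
    rw [hA]
    refine this.trans ?_
    rw [Real.div_rpow hδ0.le hr0.le, hrpow]
    have hzne : (‖z‖ ^ η) ≠ 0 := (Real.rpow_pos_of_pos hr η).ne'
    have heq : δ ^ (η / 2) / ‖z‖ ^ η / (η / 2) = 2 / η * δ ^ (η / 2) * (‖z‖ ^ η)⁻¹ := by
      field_simp
    rw [heq]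
  have hBle : B ≤ 2 / η' * δ ^ (η' / 2) * ‖z‖ ^ η' := by
    have := aux_log_le (by positivity : (0:ℝ) ≤ δ * r) (α := η' / 2) (by linarith) (by linarith)
    rw [hB]
    refine this.trans ?_
    rw [Real.mul_rpow hδ0.le hr0.le, hrpow]
    have : δ ^ (η' / 2) * ‖z‖ ^ η' / (η' / 2) = 2 / η' * δ ^ (η' / 2) * ‖z‖ ^ η' := by
      field_simp
    rw [this]
  have habs : |fReg δ r - Real.log r| ≤ A + B := by
    rw [hfd]
    exact (abs_sub A B).trans (by rw [abs_of_nonneg hA0, abs_of_nonneg hB0])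
  calc |fReg δ r - Real.log r| * ‖z‖ ≤ (A + B) * ‖z‖ :=
        mul_le_mul_of_nonneg_right habs (norm_nonneg z)
    _ ≤ (2 / η * δ ^ (η / 2) * (‖z‖ ^ η)⁻¹ + 2 / η' * δ ^ (η' / 2) * ‖z‖ ^ η') * ‖z‖ :=
        mul_le_mul_of_nonneg_right (add_le_add hAle hBle) (norm_nonneg z)
    _ = 2 / η * δ ^ (η / 2) * ‖z‖ ^ (1 - η) + 2 / η' * δ ^ (η' / 2) * ‖z‖ ^ (1 + η') := by
        have e1 : (‖z‖ ^ η)⁻¹ * ‖z‖ = ‖z‖ ^ (1 - η) := by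
          rw [show (1 : ℝ) - η = -η + 1 by ring, Real.rpow_add hr, Real.rpow_one,
            Real.rpow_neg (norm_nonneg z)]
        have e2 : ‖z‖ ^ η' * ‖z‖ = ‖z‖ ^ (1 + η') := by
          rw [add_comm, Real.rpow_add hr, Real.rpow_one]
        rw [add_mul, mul_assoc (2 / η * δ ^ (η / 2)), mul_assoc (2 / η' * δ ^ (η' / 2)), e1, e2]
end

section
/- Let d ≥ 1, let p ≥ 1 be a real number, let η ∈ (0,1], and let u : ℝ^d → ℂ be measurable. Then, with all Lebesgue integrals interpreted in the extended nonnegative reals, (∫_{ℝ^d} |u(x)·log(|u(x)|²)|^p dx)^{1/p} ≤ (4/η)·[ (∫_{ℝ^d} |u(x)|^{p(1−η)} dx)^{1/p} + (∫_{ℝ^d} |u(x)|^{p(1+η)} dx)^{1/p} ]; in particular the L^p norm of u·log(|u|²) is controlled by the L^{p(1−η)} and L^{p(1+η)} norms of u. -/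
/-!
Pointwise, `t |log t| ≤ t ^ (1 - η) / η` for `t ≤ 1` and `t |log t| ≤ t ^ (1 + η) / η` for
`t ≥ 1`, since `log s ≤ s ^ η / η` for `s ≥ 1` (applied to `s = 1/t` and `s = t`).
Hence `|u log |u|²| ≤ (2/η) (|u| ^ (1 - η) + |u| ^ (1 + η))`, and Minkowski's inequality in
`L^p` splits the right-hand side into the two norms.
-/

open MeasureTheory
open scoped ENNReal

namespace Real

theorem mul_abs_log_le_rpow_add_rpow {η : ℝ} (hη : 0 < η) {t : ℝ} (ht : 0 ≤ t) :
    t * |log t| ≤ (t ^ (1 - η) + t ^ (1 + η)) / η := by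
  rcases ht.eq_or_lt with rfl | ht
  · rw [zero_mul]
    positivity
  rcases le_total t 1 with ht1 | ht1
  · have hlog : |log t * t ^ η| ≤ 1 / η := (abs_log_mul_self_rpow_lt t η ht ht1 hη).le
    calc t * |log t| = t ^ (1 - η) * |log t * t ^ η| := by
          rw [abs_mul, abs_of_pos (rpow_pos_of_pos ht η), mul_left_comm, ← rpow_add ht,
            sub_add_cancel, rpow_one, mul_comm]
      _ ≤ t ^ (1 - η) * (1 / η) := by gcongr
      _ ≤ (t ^ (1 - η) + t ^ (1 + η)) / η := by
          rw [mul_one_div]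
          gcongr
          exact le_add_of_nonneg_right (rpow_nonneg ht.le _)
  · calc t * |log t| = t * log t := by rw [abs_of_nonneg (log_nonneg ht1)]
      _ ≤ t * (t ^ η / η) := by gcongr; exact log_le_rpow_div ht.le hη
      _ = t ^ (1 + η) / η := by rw [mul_div_assoc', rpow_add ht, rpow_one]
      _ ≤ (t ^ (1 - η) + t ^ (1 + η)) / η := by
          gcongr
          exact le_add_of_nonneg_left (rpow_nonneg ht.le _)

end Real

theorem Complex.norm_mul_log_norm_sq_le {η : ℝ} (hη : 0 < η) (z : ℂ) :
    ‖z * (Real.log (‖z‖ ^ 2) : ℂ)‖ ≤ 2 / η * (‖z‖ ^ (1 - η) + ‖z‖ ^ (1 + η)) := by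
  rw [norm_mul, Complex.norm_real, Real.norm_eq_abs, Real.log_pow, Nat.cast_ofNat, abs_mul,
    abs_two]
  calc ‖z‖ * (2 * |Real.log ‖z‖|) = 2 * (‖z‖ * |Real.log ‖z‖|) := by ring
    _ ≤ 2 * ((‖z‖ ^ (1 - η) + ‖z‖ ^ (1 + η)) / η) := by
        gcongr
        exact Real.mul_abs_log_le_rpow_add_rpow hη (norm_nonneg z)
    _ = 2 / η * (‖z‖ ^ (1 - η) + ‖z‖ ^ (1 + η)) := by ring

namespace ENNReal

theorem ofReal_rpow_rpow {a : ℝ} (ha : 0 ≤ a) (b : ℝ) {p : ℝ} (hp : 0 ≤ p) :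
    ENNReal.ofReal (a ^ b) ^ p = ENNReal.ofReal (a ^ (p * b)) := by
  rw [ofReal_rpow_of_nonneg (Real.rpow_nonneg ha b) hp, ← Real.rpow_mul ha, mul_comm]

variable {α : Type*} [MeasurableSpace α] {μ : Measure α}

theorem lintegral_Lp_const_mul {p : ℝ} (hp : 0 < p) (c : ℝ≥0∞) {f : α → ℝ≥0∞}
    (hf : AEMeasurable f μ) :
    (∫⁻ x, (c * f x) ^ p ∂μ) ^ (1 / p) = c * (∫⁻ x, f x ^ p ∂μ) ^ (1 / p) := by
  simp_rw [mul_rpow_of_nonneg _ _ hp.le]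
  rw [lintegral_const_mul'' _ (hf.pow_const p), mul_rpow_of_nonneg _ _ (by positivity),
    ← rpow_mul, mul_one_div_cancel hp.ne', rpow_one]

theorem lintegral_Lp_le_mul_add {p : ℝ} (hp : 1 ≤ p) {F g h : α → ℝ≥0∞} (c : ℝ≥0∞)
    (hg : AEMeasurable g μ) (hh : AEMeasurable h μ) (hF : ∀ x, F x ≤ c * (g x + h x)) :
    (∫⁻ x, F x ^ p ∂μ) ^ (1 / p) ≤
      c * ((∫⁻ x, g x ^ p ∂μ) ^ (1 / p) + (∫⁻ x, h x ^ p ∂μ) ^ (1 / p)) := by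
  have hp0 : 0 < p := zero_lt_one.trans_le hp
  calc (∫⁻ x, F x ^ p ∂μ) ^ (1 / p) ≤ (∫⁻ x, (c * (g x + h x)) ^ p ∂μ) ^ (1 / p) := by
        gcongr with x
        exact hF x
    _ = c * (∫⁻ x, (g + h) x ^ p ∂μ) ^ (1 / p) :=
        lintegral_Lp_const_mul hp0 c (hg.add hh)
    _ ≤ c * ((∫⁻ x, g x ^ p ∂μ) ^ (1 / p) + (∫⁻ x, h x ^ p ∂μ) ^ (1 / p)) := by
        gcongr
        exact lintegral_Lp_add_le hg hh hp

end ENNReal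

theorem log_nonlinearity_Lp_bound_general (d : ℕ) (p : ℝ) (hp : 1 ≤ p)
    (η : ℝ) (hη : η ∈ Set.Ioc (0 : ℝ) 1)
    (u : EuclideanSpace ℝ (Fin d) → ℂ) (hu : Measurable u) :
    (∫⁻ x, ENNReal.ofReal (‖u x * (Real.log (‖u x‖ ^ 2) : ℂ)‖ ^ p)) ^ (1 / p) ≤
      ENNReal.ofReal (4 / η) *
        ((∫⁻ x, ENNReal.ofReal (‖u x‖ ^ (p * (1 - η)))) ^ (1 / p) +
          (∫⁻ x, ENNReal.ofReal (‖u x‖ ^ (p * (1 + η)))) ^ (1 / p)) := by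
  obtain ⟨hη0, -⟩ := hη
  have hp0 : 0 ≤ p := zero_le_one.trans hp
  have hbound := ENNReal.lintegral_Lp_le_mul_add (μ := volume) hp (ENNReal.ofReal (2 / η))
    (F := fun x ↦ ENNReal.ofReal ‖u x * (Real.log (‖u x‖ ^ 2) : ℂ)‖)
    (g := fun x ↦ ENNReal.ofReal (‖u x‖ ^ (1 - η)))
    (h := fun x ↦ ENNReal.ofReal (‖u x‖ ^ (1 + η))) (by fun_prop) (by fun_prop) fun x ↦ by
      rw [← ENNReal.ofReal_add (by positivity) (by positivity),
        ← ENNReal.ofReal_mul (div_nonneg zero_le_two hη0.le)]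
      exact ENNReal.ofReal_le_ofReal (Complex.norm_mul_log_norm_sq_le hη0 (u x))
  simp only [ENNReal.ofReal_rpow_of_nonneg (norm_nonneg _) hp0,
    ENNReal.ofReal_rpow_rpow (norm_nonneg _) _ hp0] at hbound
  refine hbound.trans ?_
  gcongr
  norm_num

/-- `L^p` bound for the logarithmic nonlinearity: for measurable `u : ℝ^d → ℂ`,
`p ≥ 1` and `η ∈ (0,1]`,
`(∫ |u log(|u|²)|^p)^{1/p}
  ≤ (4/η) [ (∫ |u|^{p(1−η)})^{1/p} + (∫ |u|^{p(1+η)})^{1/p} ]`,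
with all Lebesgue integrals interpreted in `[0,∞]`. -/
theorem log_nonlinearity_Lp_bound (d : ℕ) (hd : 1 ≤ d) (p : ℝ) (hp : 1 ≤ p)
    (η : ℝ) (hη : η ∈ Set.Ioc (0 : ℝ) 1)
    (u : EuclideanSpace ℝ (Fin d) → ℂ) (hu : Measurable u) :
    (∫⁻ x, ENNReal.ofReal (‖u x * (Real.log (‖u x‖ ^ 2) : ℂ)‖ ^ p)) ^ (1 / p) ≤
      ENNReal.ofReal (4 / η) *
        ((∫⁻ x, ENNReal.ofReal (‖u x‖ ^ (p * (1 - η)))) ^ (1 / p) +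
          (∫⁻ x, ENNReal.ofReal (‖u x‖ ^ (p * (1 + η)))) ^ (1 / p)) :=
  log_nonlinearity_Lp_bound_general d p hp η hη u hu
end

section
/- Let δ > 0, λ, α₁ ∈ ℝ, and w₀ ∈ ℂ. Define φ(t) = ∫₀ᵗ f_δ(|w₀|²·e^{−2α₁ s}) ds and w(t) = exp(−α₁·t + i·λ·φ(t))·w₀. Then w(0) = w₀, |w(t)| = e^{−α₁ t}·|w₀| for all t, and for every t ∈ ℝ the function w has derivative i·λ·f_δ(|w(t)|²)·w(t) − α₁·w(t) at t; that is, w is a global solution of the damped regularized logarithmic ODE dw = i·λ·f_δ(|w|²)·w dt − α₁·w dt with initial datum w₀. -/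
/-!
The modulus of `w` is `e^{-α₁ t} |w₀|`, so `f_δ(|w(t)|²)` is exactly the integrand defining `φ`.
Since that integrand is continuous (`f_δ` is continuous on `[0, ∞)` for `δ > 0`), `φ' = f_δ(|w|²)`
by the fundamental theorem of calculus, and differentiating the exponential gives the ODE.
-/

open Complex

lemma continuousOn_fReg {δ : ℝ} (hδ : 0 < δ) : ContinuousOn (fReg δ) (Set.Ici 0) := by
  intro r (hr : 0 ≤ r)
  have hpos : 0 < (δ + r) / (1 + δ * r) := by positivity
  have hden : 1 + δ * r ≠ 0 := by positivity
  have hquot : ContinuousAt (fun r => (δ + r) / (1 + δ * r)) r := by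
    fun_prop (disch := exact hden)
  exact (hquot.log hpos.ne').continuousWithinAt

noncomputable def dampedPhase (α lam : ℝ) (φ : ℝ → ℝ) (w₀ : ℂ) (t : ℝ) : ℂ :=
  exp ((-α * t : ℝ) + I * (lam : ℂ) * (φ t : ℂ)) * w₀

section dampedPhase

variable {α lam : ℝ} {φ : ℝ → ℝ} {w₀ : ℂ}

lemma dampedPhase_zero (hφ : φ 0 = 0) : dampedPhase α lam φ w₀ 0 = w₀ := by
  simp [dampedPhase, hφ]

lemma norm_dampedPhase (t : ℝ) :
    ‖dampedPhase α lam φ w₀ t‖ = Real.exp (-α * t) * ‖w₀‖ := by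
  rw [dampedPhase, norm_mul, norm_exp]
  simp

lemma norm_dampedPhase_sq (t : ℝ) :
    ‖dampedPhase α lam φ w₀ t‖ ^ 2 = ‖w₀‖ ^ 2 * Real.exp (-2 * α * t) := by
  rw [norm_dampedPhase, mul_pow, ← Real.exp_nat_mul]
  ring_nf

lemma hasDerivAt_dampedPhase {g t : ℝ} (hφ : HasDerivAt φ g t) :
    HasDerivAt (dampedPhase α lam φ w₀)
      (I * lam * g * dampedPhase α lam φ w₀ t - α * dampedPhase α lam φ w₀ t) t := by
  have hlin : HasDerivAt (fun s : ℝ => ((-α * s : ℝ) : ℂ)) (-α : ℝ) t :=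
    ((hasDerivAt_id t).const_mul (-α)).ofReal_comp.congr_deriv (by simp)
  have hexponent := hlin.add (hφ.ofReal_comp.const_mul (I * lam))
  refine (hexponent.cexp.mul_const w₀).congr_deriv ?_
  simp only [dampedPhase, Pi.add_apply]
  push_cast
  ring

end dampedPhase

/-- Explicit global solution of the damped regularized logarithmic ODE
`dw = i λ f_δ(|w|²) w dt − α₁ w dt`: with
`φ(t) = ∫₀ᵗ f_δ(|w₀|² e^{−2α₁ s}) ds` and `w(t) = exp(−α₁ t + i λ φ(t)) w₀`,
we have `w(0) = w₀`, `|w(t)| = e^{−α₁ t} |w₀|`, and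
`w'(t) = i λ f_δ(|w(t)|²) w(t) − α₁ w(t)` for every `t`. -/
theorem regularized_log_ODE_solution (δ lam α₁ : ℝ) (hδ : 0 < δ) (w₀ : ℂ)
    (φ : ℝ → ℝ)
    (hφ : ∀ t : ℝ, φ t = ∫ s in (0 : ℝ)..t, fReg δ (‖w₀‖ ^ 2 * Real.exp (-2 * α₁ * s)))
    (w : ℝ → ℂ)
    (hw : ∀ t : ℝ, w t = Complex.exp ((-α₁ * t : ℝ) + Complex.I * (lam : ℂ) * (φ t : ℂ)) * w₀) :
    w 0 = w₀ ∧
    (∀ t : ℝ, ‖w t‖ = Real.exp (-α₁ * t) * ‖w₀‖) ∧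
    ∀ t : ℝ, HasDerivAt w
      (Complex.I * (lam : ℂ) * (fReg δ (‖w t‖ ^ 2) : ℂ) * w t - (α₁ : ℂ) * w t) t := by
  obtain rfl : w = dampedPhase α₁ lam φ w₀ := funext hw
  obtain rfl : φ = fun t => ∫ s in (0 : ℝ)..t, fReg δ (‖w₀‖ ^ 2 * Real.exp (-2 * α₁ * s)) :=
    funext hφ
  have hcont : Continuous fun s => fReg δ (‖w₀‖ ^ 2 * Real.exp (-2 * α₁ * s)) :=
    (continuousOn_fReg hδ).comp_continuous (by fun_prop) fun s => Set.mem_Ici.2 (by positivity)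
  refine ⟨dampedPhase_zero intervalIntegral.integral_same, norm_dampedPhase, fun t => ?_⟩
  rw [norm_dampedPhase_sq]
  exact hasDerivAt_dampedPhase (hcont.integral_hasStrictDerivAt 0 t).hasDerivAt
end

section
/- Let λ, α₁ ∈ ℝ and let w₀ ∈ ℂ with w₀ ≠ 0. Define w(t) = exp( −α₁·t + i·λ·( t·log(|w₀|²) − α₁·t² ) )·w₀. Then w(0) = w₀, |w(t)| = e^{−α₁ t}·|w₀| for all t, and for every t ∈ ℝ the function w has derivative i·λ·log(|w(t)|²)·w(t) − α₁·w(t) at t; that is, w is a global solution of the damped logarithmic ODE dw = i·λ·log(|w|²)·w dt − α₁·w dt with initial datum w₀. -/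
/-!
Writing `L = log |w₀|²`, the exponent of `w` is the complex quadratic `a t + b t²` with
`a = -α₁ + i λ L` and `b = -i λ α₁`, so `w' = (a + 2 b t) w = (-α₁ + i λ (L - 2 α₁ t)) w`.
Its real part is `-α₁ t`, whence `|w(t)| = e^{-α₁ t} |w₀|` and `log |w(t)|² = L - 2 α₁ t`,
which turns the derivative into the right-hand side of the ODE.
-/

open Complex

theorem hasDerivAt_cexp_quadratic_mul (a b c z : ℂ) :
    HasDerivAt (fun z => exp (a * z + b * z ^ 2) * c)
      ((a + 2 * b * z) * (exp (a * z + b * z ^ 2) * c)) z := by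
  have hexponent : HasDerivAt (fun z => a * z + b * z ^ 2) (a + 2 * b * z) z := by
    refine (((hasDerivAt_id' z).const_mul a).add
      ((hasDerivAt_pow 2 z).const_mul b)).congr_deriv ?_
    push_cast
    ring
  exact (hexponent.cexp.mul_const c).congr_deriv (by ring)

theorem Real.log_sq_exp_mul {r : ℝ} (hr : r ≠ 0) (x : ℝ) :
    Real.log ((Real.exp x * r) ^ 2) = 2 * x + Real.log (r ^ 2) := by
  rw [mul_pow, ← Real.exp_nat_mul, Real.log_mul (Real.exp_ne_zero _) (pow_ne_zero 2 hr),
    Real.log_exp]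
  push_cast
  ring

/-- Explicit global solution of the damped logarithmic ODE
`dw = i λ log(|w|²) w dt − α₁ w dt` for a nonzero initial datum `w₀`:
with `w(t) = exp(−α₁ t + i λ (t log(|w₀|²) − α₁ t²)) w₀` one has `w(0) = w₀`,
`|w(t)| = e^{−α₁ t} |w₀|`, and `w'(t) = i λ log(|w(t)|²) w(t) − α₁ w(t)`. -/
theorem log_ODE_solution (lam α₁ : ℝ) (w₀ : ℂ) (hw₀ : w₀ ≠ 0)
    (w : ℝ → ℂ)
    (hw : ∀ t : ℝ, w t = Complex.exp ((-α₁ * t : ℝ) +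
      Complex.I * (lam : ℂ) * ((t * Real.log (‖w₀‖ ^ 2) - α₁ * t ^ 2 : ℝ) : ℂ)) * w₀) :
    w 0 = w₀ ∧
    (∀ t : ℝ, ‖w t‖ = Real.exp (-α₁ * t) * ‖w₀‖) ∧
    ∀ t : ℝ, HasDerivAt w
      (Complex.I * (lam : ℂ) * (Real.log (‖w t‖ ^ 2) : ℂ) * w t - (α₁ : ℂ) * w t) t := by
  set L := Real.log (‖w₀‖ ^ 2)
  have hnorm (t : ℝ) : ‖w t‖ = Real.exp (-α₁ * t) * ‖w₀‖ := by
    rw [hw t, norm_mul, norm_exp]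
    simp only [add_re, mul_re, mul_im, I_re, I_im, ofReal_re, ofReal_im]
    ring_nf
  have hlog (t : ℝ) : Real.log (‖w t‖ ^ 2) = L - 2 * α₁ * t := by
    rw [hnorm t, Real.log_sq_exp_mul (norm_ne_zero_iff.mpr hw₀)]
    ring
  refine ⟨by simp [hw 0], hnorm, fun t => ?_⟩
  have hw_quadratic : w = fun s : ℝ =>
      exp ((-α₁ + I * lam * L) * s + (-I * lam * α₁) * (s : ℂ) ^ 2) * w₀ := by
    funext s
    rw [hw s]
    push_cast
    ring_nf
  have hderiv : HasDerivAt w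
      ((-α₁ + I * lam * L + 2 * (-I * lam * α₁) * t) * w t) t := by
    rw [hw_quadratic]
    exact (hasDerivAt_cexp_quadratic_mul _ _ w₀ (t : ℂ)).comp_ofReal
  convert hderiv using 1
  rw [hlog t]
  push_cast
  ring
end

section
/- Let 0 < δ₂ ≤ δ₁ ≤ 1 and let η, η' ∈ (0,1]. For every complex number z one has |f_{δ₁}(|z|²)·z − f_{δ₂}(|z|²)·z| ≤ (2/η)·δ₁^{η/2}·|z|^{1−η} + (2/η')·δ₁^{η'/2}·|z|^{1+η'}. -/
open Real

lemma Real.log_one_add_le_rpow_div {x α : ℝ} (hx : 0 ≤ x) (hα : 0 < α) (hα1 : α ≤ 1) :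
    log (1 + x) ≤ x ^ α / α := by
  rw [le_div_iff₀ hα, mul_comm, ← log_rpow (by positivity)]
  calc log ((1 + x) ^ α) ≤ log (1 + x ^ α) := by
        refine log_le_log (by positivity) ?_
        simpa using rpow_add_le_add_rpow zero_le_one hx hα.le hα1
    _ ≤ x ^ α := by linarith [log_le_sub_one_of_pos (show 0 < 1 + x ^ α by positivity)]

lemma fReg_eq_log_sub_log {δ r : ℝ} (hδ : 0 ≤ δ) (hr : 0 < r) :
    fReg δ r = log (δ + r) - log (1 + δ * r) :=
  log_div (by positivity) (by positivity)

lemma abs_fReg_sub_fReg_le {δ₁ δ₂ r : ℝ} (hδ₂ : 0 ≤ δ₂) (hδ₂₁ : δ₂ ≤ δ₁) (hr : 0 < r) :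
    |fReg δ₁ r - fReg δ₂ r| ≤ log (1 + δ₁ / r) + log (1 + δ₁ * r) := by
  have hδ₁ : 0 ≤ δ₁ := hδ₂.trans hδ₂₁
  rw [fReg_eq_log_sub_log hδ₁ hr, fReg_eq_log_sub_log hδ₂ hr]
  have hA₀ : log (δ₂ + r) ≤ log (δ₁ + r) := log_le_log (by positivity) (by linarith)
  have hB₀ : log (1 + δ₂ * r) ≤ log (1 + δ₁ * r) := log_le_log (by positivity) (by nlinarith)
  have hA : log (δ₁ + r) - log (δ₂ + r) ≤ log (1 + δ₁ / r) := by
    have hsplit : log (δ₁ + r) = log (1 + δ₁ / r) + log r := by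
      rw [← log_mul (by positivity) hr.ne']
      congr 1
      field_simp
      ring
    linarith [log_le_log hr (show r ≤ δ₂ + r by linarith)]
  have hB : log (1 + δ₁ * r) - log (1 + δ₂ * r) ≤ log (1 + δ₁ * r) := by
    linarith [log_nonneg (show 1 ≤ 1 + δ₂ * r by nlinarith)]
  rw [abs_le]
  constructor <;> linarith

section PowerBounds

variable {δ s η : ℝ}

lemma log_one_add_div_sq_mul_le (hδ : 0 ≤ δ) (hs : 0 < s) (hη : 0 < η) (hη2 : η ≤ 2) :
    log (1 + δ / s ^ 2) * s ≤ 2 / η * δ ^ (η / 2) * s ^ (1 - η) := by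
  have hpow : (δ / s ^ 2) ^ (η / 2) * s = δ ^ (η / 2) * s ^ (1 - η) := by
    rw [div_rpow hδ (by positivity), ← rpow_natCast, ← rpow_mul hs.le, rpow_sub hs, rpow_one]
    push_cast
    field_simp
  calc log (1 + δ / s ^ 2) * s ≤ (δ / s ^ 2) ^ (η / 2) / (η / 2) * s := by
        gcongr
        exact log_one_add_le_rpow_div (by positivity) (by positivity) (by linarith)
    _ = 2 / η * δ ^ (η / 2) * s ^ (1 - η) := by
        rw [div_mul_eq_mul_div, hpow]
        field_simp

lemma log_one_add_mul_sq_mul_le (hδ : 0 ≤ δ) (hs : 0 < s) (hη : 0 < η) (hη2 : η ≤ 2) :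
    log (1 + δ * s ^ 2) * s ≤ 2 / η * δ ^ (η / 2) * s ^ (1 + η) := by
  have hpow : (δ * s ^ 2) ^ (η / 2) * s = δ ^ (η / 2) * s ^ (1 + η) := by
    rw [mul_rpow hδ (by positivity), ← rpow_natCast, ← rpow_mul hs.le, rpow_add hs, rpow_one]
    push_cast
    field_simp
  calc log (1 + δ * s ^ 2) * s ≤ (δ * s ^ 2) ^ (η / 2) / (η / 2) * s := by
        gcongr
        exact log_one_add_le_rpow_div (by positivity) (by positivity) (by linarith)
    _ = 2 / η * δ ^ (η / 2) * s ^ (1 + η) := by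
        rw [div_mul_eq_mul_div, hpow]
        field_simp

end PowerBounds

theorem regularized_log_comparison_general (δ₁ δ₂ η η' : ℝ)
    (hδ₂ : 0 < δ₂) (hδ₂₁ : δ₂ ≤ δ₁)
    (hη : η ∈ Set.Ioc (0 : ℝ) 1) (hη' : η' ∈ Set.Ioc (0 : ℝ) 1) (z : ℂ) :
    ‖(fReg δ₁ (‖z‖ ^ 2) : ℂ) * z - (fReg δ₂ (‖z‖ ^ 2) : ℂ) * z‖ ≤
      2 / η * δ₁ ^ (η / 2) * ‖z‖ ^ (1 - η) + 2 / η' * δ₁ ^ (η' / 2) * ‖z‖ ^ (1 + η') := by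
  obtain ⟨hη₀, hη₁⟩ := hη
  obtain ⟨hη'₀, hη'₁⟩ := hη'
  have hδ₁ : 0 ≤ δ₁ := hδ₂.le.trans hδ₂₁
  rcases eq_or_ne z 0 with rfl | hz
  · simp only [norm_zero, mul_zero, sub_zero]
    positivity
  have hs : 0 < ‖z‖ := norm_pos_iff.2 hz
  rw [← sub_mul, ← Complex.ofReal_sub, norm_mul, Complex.norm_real, Real.norm_eq_abs]
  calc |fReg δ₁ (‖z‖ ^ 2) - fReg δ₂ (‖z‖ ^ 2)| * ‖z‖
      ≤ (log (1 + δ₁ / ‖z‖ ^ 2) + log (1 + δ₁ * ‖z‖ ^ 2)) * ‖z‖ := by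
        gcongr
        exact abs_fReg_sub_fReg_le hδ₂.le hδ₂₁ (by positivity)
    _ ≤ _ := by
        rw [add_mul]
        exact add_le_add (log_one_add_div_sq_mul_le hδ₁ hs hη₀ (by linarith))
          (log_one_add_mul_sq_mul_le hδ₁ hs hη'₀ (by linarith))

/-- Pointwise comparison of two regularizations: for `0 < δ₂ ≤ δ₁ ≤ 1` and
`η, η' ∈ (0,1]`, every complex `z` satisfies
`|f_{δ₁}(|z|²) z − f_{δ₂}(|z|²) z| ≤ (2/η) δ₁^{η/2} |z|^{1−η} + (2/η') δ₁^{η'/2} |z|^{1+η'}`. -/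
theorem regularized_log_comparison (δ₁ δ₂ η η' : ℝ)
    (hδ₂ : 0 < δ₂) (hδ₂₁ : δ₂ ≤ δ₁) (hδ₁ : δ₁ ≤ 1)
    (hη : η ∈ Set.Ioc (0 : ℝ) 1) (hη' : η' ∈ Set.Ioc (0 : ℝ) 1) (z : ℂ) :
    ‖(fReg δ₁ (‖z‖ ^ 2) : ℂ) * z - (fReg δ₂ (‖z‖ ^ 2) : ℂ) * z‖ ≤
      2 / η * δ₁ ^ (η / 2) * ‖z‖ ^ (1 - η) + 2 / η' * δ₁ ^ (η' / 2) * ‖z‖ ^ (1 + η') :=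
  regularized_log_comparison_general δ₁ δ₂ η η' hδ₂ hδ₂₁ hη hη' z
end
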